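/- General lemma with parameter b (unilateral version): If (α_n, β_n)_{n≥0} is a Bailey pair relative to a, then (α'_n, β'_n) is a Bailey pair relative to a/q, where α'_0 = α_0, α'_n = ((1-a)/(1-b)) ( (1 - b q^n) α_n/(1 - a q^{2n}) - q^{n-1}(a q^{n-1} - b) α_{n-1}/(1 - a q^{2n-2}) ) for n ≥ 1, and β'_n = ((1 - b q^n)/(1-b)) β_n; that is, β'_n = Σ_{j=0}^{n} α'_j / ((q;q)_{n-j} (a;q)_{n+j}) for all n ≥ 0. -/
import Mathlib


/-- The q-Pochhammer symbol `(x;q)_k = ∏_{i=0}^{k-1} (1 - x q^i)`. -/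
noncomputable def qp (q x : ℂ) (k : ℕ) : ℂ := ∏ i ∈ Finset.range k, (1 - x * q ^ i)

lemma qp_zero (q x : ℂ) : qp q x 0 = 1 := by simp [qp]

lemma qp_succ (q x : ℂ) (k : ℕ) : qp q x (k + 1) = qp q x k * (1 - x * q ^ k) := by
  simp [qp, Finset.prod_range_succ]

lemma qp_shift (q x : ℂ) (k : ℕ) : qp q x (k + 1) = (1 - x) * qp q (x * q) k := by
  rw [qp, Finset.prod_range_succ', pow_zero, mul_one, mul_comm]
  congr 1
  exact Finset.prod_congr rfl (fun i _ => by ring)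

set_option maxHeartbeats 1000000 in
lemma key1 (q a b A Q P P' : ℂ) (j d : ℕ)
    (hb1 : (1:ℂ) - b ≠ 0) (ha1 : (1:ℂ) - a ≠ 0)
    (h2j : 1 - a * q ^ (2 * j) ≠ 0)
    (hqd : 1 - q * q ^ d ≠ 0)
    (hN : 1 - a * q ^ (j + d + 1 + j) ≠ 0)
    (hQ : Q ≠ 0) (hP : P ≠ 0) (hP' : P' ≠ 0)
    (hrel : P * (1 - a * q ^ (j + d + 1 + j)) = (1 - a) * P') :
    (1 - a) / (1 - b) * ((1 - b * q ^ j) * A / (1 - a * q ^ (2 * j))) /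
        (Q * (1 - q * q ^ d) * P)
      - (1 - a) / (1 - b) * (q ^ j * (a * q ^ j - b) * A / (1 - a * q ^ (2 * j))) /
        (Q * (P * (1 - a * q ^ (j + d + 1 + j))))
    = (1 - b * q ^ (j + d + 1)) / (1 - b) *
        (A / (Q * (1 - q * q ^ d) * P')) := by
  have hD1 : (1 - b) * (1 - a * q ^ (2 * j)) * (Q * (1 - q * q ^ d) * P) ≠ 0 :=
    mul_ne_zero (mul_ne_zero hb1 h2j) (mul_ne_zero (mul_ne_zero hQ hqd) hP)
  have hD2 : (1 - b) * (1 - a * q ^ (2 * j)) * (Q * (P * (1 - a * q ^ (j + d + 1 + j)))) ≠ 0 :=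
    mul_ne_zero (mul_ne_zero hb1 h2j) (mul_ne_zero hQ (mul_ne_zero hP hN))
  have hD3 : (1 - b) * (Q * (1 - q * q ^ d) * P') ≠ 0 :=
    mul_ne_zero hb1 (mul_ne_zero (mul_ne_zero hQ hqd) hP')
  simp only [div_mul_div_comm, div_div]
  rw [div_sub_div _ _ hD1 hD2, div_eq_div_iff (mul_ne_zero hD1 hD2) hD3]
  linear_combination (-(1 - b) ^ 2 * Q ^ 2 * (1 - q * q ^ d) * (1 - a * q ^ (2 * j)) ^ 2 *
      P * A * (1 - b * q ^ (j + d + 1))) * hrel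

set_option maxHeartbeats 1000000 in
lemma key2 (q a b A P P' : ℂ) (n : ℕ)
    (hb1 : (1:ℂ) - b ≠ 0) (ha1 : (1:ℂ) - a ≠ 0)
    (h2n : 1 - a * q ^ (2 * n) ≠ 0) (hP : P ≠ 0) (hP' : P' ≠ 0)
    (hrel : P * (1 - a * q ^ (2 * n)) = (1 - a) * P') :
    (1 - a) / (1 - b) * ((1 - b * q ^ n) * A / (1 - a * q ^ (2 * n))) / (1 * P)
    = (1 - b * q ^ n) / (1 - b) * (A / (1 * P')) := by
  have hD1 : (1 - b) * (1 - a * q ^ (2 * n)) * (1 * P) ≠ 0 :=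
    mul_ne_zero (mul_ne_zero hb1 h2n) (by simpa using hP)
  have hD3 : (1 - b) * (1 * P') ≠ 0 := mul_ne_zero hb1 (by simpa using hP')
  simp only [div_mul_div_comm, div_div]
  rw [div_eq_div_iff hD1 hD3]
  linear_combination (-(1 - b) * (1 - b * q ^ n) * A) * hrel


set_option maxHeartbeats 1000000 in
/-- General lemma with parameter `b` (unilateral): if `(α, β)` is a Bailey pair relative
to `a`, then `(α', β')` with `α'_0 = α_0`,
`α'_n = ((1-a)/(1-b))((1-bq^n)α_n/(1-aq^{2n}) - q^{n-1}(aq^{n-1}-b)α_{n-1}/(1-aq^{2n-2}))`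
and `β'_n = ((1-bq^n)/(1-b)) β_n` is a Bailey pair relative to `a/q`. -/
theorem general_lemma_b (q a b : ℂ) (hb : b ≠ 1) (α β α' β' : ℕ → ℂ)
    (hqq : ∀ k, qp q q k ≠ 0) (ha : ∀ k, qp q a k ≠ 0) (haq : ∀ k, qp q (a * q) k ≠ 0)
    (hden : ∀ n : ℕ, 1 - a * q ^ (2 * n) ≠ 0)
    (hB : ∀ n, β n = ∑ j ∈ Finset.range (n + 1),
        α j / (qp q q (n - j) * qp q (a * q) (n + j)))
    (hα'0 : α' 0 = α 0)
    (hα' : ∀ n : ℕ, α' (n + 1) = ((1 - a) / (1 - b)) *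
        ((1 - b * q ^ (n + 1)) * α (n + 1) / (1 - a * q ^ (2 * (n + 1)))
          - q ^ n * (a * q ^ n - b) * α n / (1 - a * q ^ (2 * n))))
    (hβ' : ∀ n : ℕ, β' n = (1 - b * q ^ n) / (1 - b) * β n) :
    ∀ n, β' n = ∑ j ∈ Finset.range (n + 1),
        α' j / (qp q q (n - j) * qp q a (n + j)) := by
  have hb1 : (1:ℂ) - b ≠ 0 := sub_ne_zero.mpr (fun h => hb h.symm)
  have ha1 : (1:ℂ) - a ≠ 0 := by simpa using hden 0
  have hrel : ∀ m, qp q a m * (1 - a * q ^ m) = (1 - a) * qp q (a * q) m := fun m => by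
    rw [← qp_succ, qp_shift]
  have hfaca : ∀ m, (1:ℂ) - a * q ^ m ≠ 0 := fun m => by
    have h := ha (m + 1); rw [qp_succ] at h; exact (mul_ne_zero_iff.mp h).2
  have hfacq : ∀ m, (1:ℂ) - q * q ^ m ≠ 0 := fun m => by
    have h := hqq (m + 1); rw [qp_succ] at h; exact (mul_ne_zero_iff.mp h).2
  intro n
  rw [hβ' n, hB n, Finset.mul_sum]
  have main : ∑ j ∈ Finset.range (n + 1), α' j / (qp q q (n - j) * qp q a (n + j))
      = ∑ j ∈ Finset.range (n + 1),
          (1 - b * q ^ n) / (1 - b) * (α j / (qp q q (n - j) * qp q (a * q) (n + j))) := by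
    calc ∑ j ∈ Finset.range (n + 1), α' j / (qp q q (n - j) * qp q a (n + j))
        = (∑ j ∈ Finset.range n,
            ((1 - a) / (1 - b) * ((1 - b * q ^ (j + 1)) * α (j + 1) / (1 - a * q ^ (2 * (j + 1)))) /
                (qp q q (n - (j + 1)) * qp q a (n + (j + 1)))
              - (1 - a) / (1 - b) * (q ^ j * (a * q ^ j - b) * α j / (1 - a * q ^ (2 * j))) /
                (qp q q (n - (j + 1)) * qp q a (n + (j + 1)))))
          + (1 - a) / (1 - b) * ((1 - b * q ^ (0:ℕ)) * α 0 / (1 - a * q ^ (2 * 0))) /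
              (qp q q (n - 0) * qp q a (n + 0)) := by
          rw [Finset.sum_range_succ']
          congr 1
          · exact Finset.sum_congr rfl (fun j hj => by rw [hα' j]; ring)
          · rw [hα'0,
              show (1 - a) / (1 - b) * ((1 - b * q ^ (0:ℕ)) * α 0 / (1 - a * q ^ (2 * 0))) = α 0
                from by norm_num; field_simp]
      _ = (∑ j ∈ Finset.range n,
            (1 - a) / (1 - b) * ((1 - b * q ^ (j + 1)) * α (j + 1) / (1 - a * q ^ (2 * (j + 1)))) /
                (qp q q (n - (j + 1)) * qp q a (n + (j + 1)))
            + (1 - a) / (1 - b) * ((1 - b * q ^ (0:ℕ)) * α 0 / (1 - a * q ^ (2 * 0))) /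
              (qp q q (n - 0) * qp q a (n + 0)))
          - ∑ j ∈ Finset.range n,
              (1 - a) / (1 - b) * (q ^ j * (a * q ^ j - b) * α j / (1 - a * q ^ (2 * j))) /
                (qp q q (n - (j + 1)) * qp q a (n + (j + 1))) := by
          rw [Finset.sum_sub_distrib]; ring
      _ = (∑ j ∈ Finset.range (n + 1),
            (1 - a) / (1 - b) * ((1 - b * q ^ j) * α j / (1 - a * q ^ (2 * j))) /
                (qp q q (n - j) * qp q a (n + j)))
          - ∑ j ∈ Finset.range n,
              (1 - a) / (1 - b) * (q ^ j * (a * q ^ j - b) * α j / (1 - a * q ^ (2 * j))) /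
                (qp q q (n - (j + 1)) * qp q a (n + (j + 1))) := by
          rw [Finset.sum_range_succ'
            (fun j => (1 - a) / (1 - b) * ((1 - b * q ^ j) * α j / (1 - a * q ^ (2 * j))) /
                (qp q q (n - j) * qp q a (n + j)))]
      _ = (∑ j ∈ Finset.range n,
            (1 - a) / (1 - b) * ((1 - b * q ^ j) * α j / (1 - a * q ^ (2 * j))) /
                (qp q q (n - j) * qp q a (n + j))
            + (1 - a) / (1 - b) * ((1 - b * q ^ n) * α n / (1 - a * q ^ (2 * n))) /
                (qp q q (n - n) * qp q a (n + n)))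
          - ∑ j ∈ Finset.range n,
              (1 - a) / (1 - b) * (q ^ j * (a * q ^ j - b) * α j / (1 - a * q ^ (2 * j))) /
                (qp q q (n - (j + 1)) * qp q a (n + (j + 1))) := by
          rw [Finset.sum_range_succ]
      _ = (∑ j ∈ Finset.range n,
            ((1 - a) / (1 - b) * ((1 - b * q ^ j) * α j / (1 - a * q ^ (2 * j))) /
                (qp q q (n - j) * qp q a (n + j))
              - (1 - a) / (1 - b) * (q ^ j * (a * q ^ j - b) * α j / (1 - a * q ^ (2 * j))) /
                (qp q q (n - (j + 1)) * qp q a (n + (j + 1)))))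
          + (1 - a) / (1 - b) * ((1 - b * q ^ n) * α n / (1 - a * q ^ (2 * n))) /
                (qp q q (n - n) * qp q a (n + n)) := by
          rw [Finset.sum_sub_distrib]; ring
      _ = (∑ j ∈ Finset.range n,
            (1 - b * q ^ n) / (1 - b) * (α j / (qp q q (n - j) * qp q (a * q) (n + j))))
          + (1 - b * q ^ n) / (1 - b) * (α n / (qp q q (n - n) * qp q (a * q) (n + n))) := by
          congr 1
          · refine Finset.sum_congr rfl (fun j hj => ?_)
            have hjn : j < n := Finset.mem_range.mp hj
            obtain ⟨d, rfl⟩ : ∃ d, n = j + d + 1 := ⟨n - j - 1, by omega⟩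
            rw [show j + d + 1 - j = d + 1 from by omega,
                show j + d + 1 - (j + 1) = d from by omega,
                show j + d + 1 + (j + 1) = (j + d + 1 + j) + 1 from by omega,
                qp_succ q q d, qp_succ q a (j + d + 1 + j)]
            exact key1 q a b (α j) (qp q q d) (qp q a (j + d + 1 + j)) (qp q (a * q) (j + d + 1 + j))
              j d hb1 ha1 (hden j) (hfacq d) (hfaca _) (hqq d) (ha _) (haq _) (hrel _)
          · rw [Nat.sub_self, qp_zero]
            exact key2 q a b (α n) (qp q a (n + n)) (qp q (a * q) (n + n)) n hb1 ha1 (hden n)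
              (ha _) (haq _) (by rw [two_mul]; exact hrel (n + n))
      _ = ∑ j ∈ Finset.range (n + 1),
            (1 - b * q ^ n) / (1 - b) * (α j / (qp q q (n - j) * qp q (a * q) (n + j))) := by
          rw [Finset.sum_range_succ]
  exact main.symm
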